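/- Let 1 ≤ q < ∞, let (Ω, μ) be a measure space, and let R : ℓ_q → L_q(μ) be a positive bounded linear operator such that: (1) ‖(Rx) ⊓ (Ry)‖ ≤ ε₁ whenever x, y are disjoint positive elements of the closed unit ball of ℓ_q, and (2) sup_i ‖R δ_i‖ ≤ ε₂, where (δ_i) is the canonical basis of ℓ_q. Then ‖R‖ ≤ 2^8·ε₁ + ε₂. -/

import Mathlib

/-!
Positivity gives `|R f| ≤ R |f|`, so it suffices to bound `‖R x‖` for `x` in the closure of the
cone of finitely supported positive vectors, and by homogeneity for `x = ∑_{i ∈ F} c_i δ_i` with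
`‖x‖ ≤ 1`. Put `a_i = R (c_i δ_i) ≥ 0`. For nonnegative reals
`∑ a_i ≤ max a_i + 4 · 2^{-|F|} ∑_{S ⊆ F} min (∑_S a_i, ∑_{F \ S} a_i)`,
because `∑_S (∑_S a_i - ∑_{F \ S} a_i)² = 2^{|F|} ∑ a_i² ≤ 2^{|F|} max a_i · ∑ a_i` and
Cauchy–Schwarz bounds the average of `|∑_S a_i - ∑_{F \ S} a_i|`. Applied pointwise this is an
inequality in `L_q(μ)`. Each infimum is at most `ε₁` in norm, since `∑_S c_i δ_i` and
`∑_{F \ S} c_i δ_i` are disjoint, and `‖max_i a_i‖^q ≤ ∑ ‖a_i‖^q ≤ ε₂^q ∑ c_i^q = (ε₂ ‖x‖)^q`.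
Hence `‖R‖ ≤ ε₂ + 4 ε₁`.
-/

open MeasureTheory ENNReal

/-- The canonical basis vector `δ_i` of `ℓ_q`, realized as `L_q` of counting measure on `ℕ`. -/
noncomputable def deltaVec (q : ℝ≥0∞) (i : ℕ) : Lp ℝ q (Measure.count : Measure ℕ) :=
  indicatorConstLp q (measurableSet_singleton i)
    (by simp [Measure.count_singleton]) (1 : ℝ)

open scoped NNReal
open Finset

section RealInequality

variable {ι : Type*} [DecidableEq ι]

theorem sum_powerset_sq_sum_sub_sum (F : Finset ι) (a : ι → ℝ) :
    ∑ S ∈ F.powerset, (∑ i ∈ S, a i - ∑ i ∈ F \ S, a i) ^ 2 = 2 ^ #F * ∑ i ∈ F, a i ^ 2 := by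
  induction F using Finset.induction_on with
  | empty => simp
  | @insert k F hk ih =>
    have hkS {S : Finset ι} (hS : S ∈ F.powerset) : k ∉ S := fun h => hk (mem_powerset.1 hS h)
    have hout {S : Finset ι} (hS : S ∈ F.powerset) : insert k F \ S = insert k (F \ S) :=
      insert_sdiff_of_notMem _ (hkS hS)
    have hin {S : Finset ι} : insert k F \ insert k S = F \ S := by
      rw [insert_sdiff_insert, sdiff_insert_of_notMem hk]
    rw [sum_powerset_insert hk, ← sum_add_distrib, card_insert_of_notMem hk, sum_insert hk]
    calc ∑ S ∈ F.powerset, ((∑ i ∈ S, a i - ∑ i ∈ insert k F \ S, a i) ^ 2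
          + (∑ i ∈ insert k S, a i - ∑ i ∈ insert k F \ insert k S, a i) ^ 2)
        = ∑ S ∈ F.powerset, (2 * (∑ i ∈ S, a i - ∑ i ∈ F \ S, a i) ^ 2 + 2 * a k ^ 2) := by
          refine sum_congr rfl fun S hS => ?_
          rw [hout hS, hin, sum_insert (by simp [hk]), sum_insert (hkS hS)]
          ring
      _ = 2 ^ (#F + 1) * (a k ^ 2 + ∑ i ∈ F, a i ^ 2) := by
          rw [sum_add_distrib, ← mul_sum, ih, sum_const, card_powerset, nsmul_eq_mul]
          push_cast
          ring

theorem sum_powerset_min_eq (F : Finset ι) (a : ι → ℝ) :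
    ∑ S ∈ F.powerset, min (∑ i ∈ S, a i) (∑ i ∈ F \ S, a i)
      = (2 ^ #F * ∑ i ∈ F, a i - ∑ S ∈ F.powerset, |∑ i ∈ S, a i - ∑ i ∈ F \ S, a i|) / 2 := by
  have hmin (S) (hS : S ∈ F.powerset) : min (∑ i ∈ S, a i) (∑ i ∈ F \ S, a i)
      = (∑ i ∈ F, a i - |∑ i ∈ S, a i - ∑ i ∈ F \ S, a i|) / 2 := by
    rw [← sum_sdiff (mem_powerset.1 hS)]
    linarith [min_add_max (∑ i ∈ S, a i) (∑ i ∈ F \ S, a i),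
      max_sub_min_eq_abs' (∑ i ∈ S, a i) (∑ i ∈ F \ S, a i)]
  rw [sum_congr rfl hmin, ← sum_div, sum_sub_distrib, sum_const, card_powerset, nsmul_eq_mul]
  push_cast
  rfl

theorem sum_le_sup'_add_sum_powerset_min {F : Finset ι} (hF : F.Nonempty) {a : ι → ℝ}
    (ha : ∀ i ∈ F, 0 ≤ a i) :
    ∑ i ∈ F, a i ≤ F.sup' hF a
      + 4 / 2 ^ #F * ∑ S ∈ F.powerset, min (∑ i ∈ S, a i) (∑ i ∈ F \ S, a i) := by
  set T := ∑ i ∈ F, a i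
  set m := F.sup' hF a
  set D := ∑ S ∈ F.powerset, |∑ i ∈ S, a i - ∑ i ∈ F \ S, a i|
  have hT : 0 ≤ T := sum_nonneg ha
  have hm : 0 ≤ m := (ha _ hF.choose_spec).trans (le_sup' a hF.choose_spec)
  have h2n : (0 : ℝ) < 2 ^ #F := by positivity
  have hsq : ∑ i ∈ F, a i ^ 2 ≤ m * T := by
    rw [mul_sum]
    exact sum_le_sum fun i hi => by
      rw [sq]; exact mul_le_mul_of_nonneg_right (le_sup' a hi) (ha i hi)
  have hD : D ^ 2 ≤ (2 ^ #F * ((m + T) / 2)) ^ 2 :=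
    calc D ^ 2 ≤ 2 ^ #F * ∑ S ∈ F.powerset, (∑ i ∈ S, a i - ∑ i ∈ F \ S, a i) ^ 2 := by
          simpa [sq_abs, card_powerset] using sq_sum_le_card_mul_sum_sq (s := F.powerset)
            (f := fun S => |∑ i ∈ S, a i - ∑ i ∈ F \ S, a i|)
      _ ≤ 2 ^ #F * (2 ^ #F * ((m + T) / 2) ^ 2) := by
          rw [sum_powerset_sq_sum_sub_sum]; gcongr; nlinarith [sq_nonneg (m - T)]
      _ = (2 ^ #F * ((m + T) / 2)) ^ 2 := by ring
  have hD' : 2 * D / 2 ^ #F ≤ m + T := by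
    rw [div_le_iff₀ h2n]
    nlinarith [(sq_le_sq₀ (sum_nonneg fun _ _ => abs_nonneg _) (by positivity)).1 hD]
  have hsplit : 4 / 2 ^ #F * ((2 ^ #F * T - D) / 2) = 2 * T - 2 * D / 2 ^ #F := by
    field_simp
    ring
  rw [sum_powerset_min_eq, hsplit]
  linarith

end RealInequality

namespace MeasureTheory.Lp

variable {α : Type*} {m : MeasurableSpace α} {μ : Measure α} {p : ℝ≥0∞}

theorem coeFn_finset_sup' {E : Type*} [NormedAddCommGroup E] [Lattice E] [HasSolidNorm E]
    [IsOrderedAddMonoid E] {ι : Type*} {F : Finset ι} (hF : F.Nonempty) (g : ι → Lp E p μ) :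
    ⇑(F.sup' hF g) =ᵐ[μ] fun x => F.sup' hF fun i => g i x := by
  induction hF using Finset.Nonempty.cons_induction with
  | singleton i => simp
  | cons k F hk hF ih =>
    simp only [sup'_cons hF]
    filter_upwards [coeFn_sup (g k) (F.sup' hF g), ih] with x hsup hx
    rw [hsup, Pi.sup_apply, hx]

theorem norm_rpow_toReal_eq_lintegral {E : Type*} [NormedAddCommGroup E] (hp0 : p ≠ 0)
    (hp : p ≠ ⊤) (f : Lp E p μ) : ‖f‖ ^ p.toReal = (∫⁻ x, ‖f x‖ₑ ^ p.toReal ∂μ).toReal := by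
  rw [norm_def, ENNReal.toReal_rpow, eLpNorm_eq_lintegral_rpow_enorm_toReal hp0 hp, one_div,
    ENNReal.rpow_inv_rpow (ENNReal.toReal_ne_zero.2 ⟨hp0, hp⟩)]

theorem norm_finset_sup'_rpow_le (hp0 : p ≠ 0) (hp : p ≠ ⊤) {ι : Type*} {F : Finset ι}
    (hF : F.Nonempty) (g : ι → Lp ℝ p μ) :
    ‖F.sup' hF g‖ ^ p.toReal ≤ ∑ i ∈ F, ‖g i‖ ^ p.toReal := by
  have hfin (f : Lp ℝ p μ) : ∫⁻ x, ‖f x‖ₑ ^ p.toReal ∂μ ≠ ⊤ :=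
    (lintegral_rpow_enorm_lt_top_of_eLpNorm_lt_top hp0 hp (eLpNorm_lt_top f)).ne
  have hpt : ∀ᵐ x ∂μ, ‖F.sup' hF g x‖ₑ ^ p.toReal ≤ ∑ i ∈ F, ‖g i x‖ₑ ^ p.toReal := by
    filter_upwards [coeFn_finset_sup' hF g] with x hx
    obtain ⟨i, hi, hmax⟩ := exists_mem_eq_sup' hF fun i => g i x
    rw [hx, hmax]
    exact single_le_sum (f := fun i => ‖g i x‖ₑ ^ p.toReal) (fun _ _ => zero_le) hi
  simp_rw [norm_rpow_toReal_eq_lintegral hp0 hp]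
  rw [← ENNReal.toReal_sum fun i _ => hfin (g i)]
  refine ENNReal.toReal_mono (ENNReal.sum_ne_top.2 fun i _ => hfin (g i)) ?_
  calc ∫⁻ x, ‖F.sup' hF g x‖ₑ ^ p.toReal ∂μ
      ≤ ∫⁻ x, ∑ i ∈ F, ‖g i x‖ₑ ^ p.toReal ∂μ := lintegral_mono_ae hpt
    _ = ∑ i ∈ F, ∫⁻ x, ‖g i x‖ₑ ^ p.toReal ∂μ :=
        lintegral_finsetSum' F fun i _ => (Lp.aestronglyMeasurable (g i)).enorm.pow_const _

theorem sum_le_sup'_add_sum_powerset_inf {ι : Type*} [DecidableEq ι] {F : Finset ι}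
    (hF : F.Nonempty) {g : ι → Lp ℝ p μ} (hg : ∀ i ∈ F, 0 ≤ g i) :
    ∑ i ∈ F, g i ≤ F.sup' hF g
      + (4 / 2 ^ #F : ℝ) • ∑ S ∈ F.powerset, (∑ i ∈ S, g i) ⊓ ∑ i ∈ F \ S, g i := by
  have hpart (S : Finset ι) : ⇑(∑ i ∈ S, g i) =ᵐ[μ] fun x => ∑ i ∈ S, g i x :=
    coeFn_fun_finsetSum S g
  have hinf : ∀ᵐ x ∂μ, ∀ S ∈ F.powerset, ((∑ i ∈ S, g i) ⊓ ∑ i ∈ F \ S, g i) x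
      = min (∑ i ∈ S, g i x) (∑ i ∈ F \ S, g i x) := by
    refine (Filter.eventually_all_finset _).2 fun S _ => ?_
    filter_upwards [coeFn_inf (∑ i ∈ S, g i) (∑ i ∈ F \ S, g i), hpart S, hpart (F \ S)]
      with x hx hS hFS
    rw [hx, Pi.inf_apply, hS, hFS]
  have hnonneg : ∀ᵐ x ∂μ, ∀ i ∈ F, 0 ≤ g i x :=
    (Filter.eventually_all_finset _).2 fun i hi => (coeFn_nonneg _).2 (hg i hi)
  rw [← coeFn_le]
  filter_upwards [hpart F, coeFn_add (F.sup' hF g) _, coeFn_finset_sup' hF g,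
    coeFn_smul (4 / 2 ^ #F : ℝ) (∑ S ∈ F.powerset, (∑ i ∈ S, g i) ⊓ ∑ i ∈ F \ S, g i),
    coeFn_fun_finsetSum F.powerset fun S => (∑ i ∈ S, g i) ⊓ ∑ i ∈ F \ S, g i, hinf, hnonneg]
    with x hsum hadd hsup hsmul hpow hinfx hnonnegx
  rw [hsum, hadd, Pi.add_apply, hsup, hsmul, Pi.smul_apply, hpow, smul_eq_mul,
    sum_congr rfl hinfx]
  exact sum_le_sup'_add_sum_powerset_min hF hnonnegx

end MeasureTheory.Lp

theorem abs_map_le_map_abs {E F G : Type*} [AddCommGroup E] [Lattice E] [IsOrderedAddMonoid E]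
    [AddCommGroup F] [Lattice F] [IsOrderedAddMonoid F] [FunLike G E F] [AddMonoidHomClass G E F]
    {R : G} (hR : ∀ x, 0 ≤ x → 0 ≤ R x) (x : E) : |R x| ≤ R |x| := by
  rw [abs_le']
  constructor
  · rw [← sub_nonneg, ← map_sub]
    exact hR _ (sub_nonneg.2 (le_abs_self x))
  · rw [neg_le_iff_add_nonneg, ← map_add]
    exact hR _ (neg_le_iff_add_nonneg.1 (neg_le_abs x))

theorem norm_le_norm_of_nonneg_of_le' {E : Type*} [NormedAddCommGroup E] [Lattice E]
    [HasSolidNorm E] [IsOrderedAddMonoid E] {a b : E} (ha : 0 ≤ a) (hab : a ≤ b) : ‖a‖ ≤ ‖b‖ :=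
  norm_le_norm_of_abs_le_abs <| by rwa [abs_of_nonneg ha, abs_of_nonneg (ha.trans hab)]

theorem ContinuousLinearMap.norm_apply_le_mul_norm_of_mem_closure {E F : Type*}
    [NormedAddCommGroup E] [NormedSpace ℝ E] [NormedAddCommGroup F] [NormedSpace ℝ F]
    (R : E →L[ℝ] F) {K : Submodule ℝ≥0 E} {C : ℝ} (hK : ∀ x ∈ K, ‖x‖ = 1 → ‖R x‖ ≤ C) {x : E}
    (hx : x ∈ closure (K : Set E)) : ‖R x‖ ≤ C * ‖x‖ := by
  refine closure_minimal (fun y hy => ?_)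
    (isClosed_le R.continuous.norm (continuous_const.mul continuous_norm)) hx
  rcases eq_or_ne y 0 with rfl | hy0
  · simp
  have hnorm : 0 < ‖y‖ := norm_pos_iff.2 hy0
  have hscaled := hK ((‖y‖₊)⁻¹ • y) (K.smul_mem _ hy) (by
    rw [NNReal.smul_def, norm_smul, NNReal.coe_inv, coe_nnnorm, norm_inv, norm_norm,
      inv_mul_cancel₀ hnorm.ne'])
  rw [NNReal.smul_def, map_smul, norm_smul, NNReal.coe_inv, coe_nnnorm, norm_inv, norm_norm,
    inv_mul_le_iff₀ hnorm, mul_comm] at hscaled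
  exact hscaled

section SequenceSpace

local notation "ℓ^" q:max => Lp ℝ q (Measure.count : Measure ℕ)

variable {q : ℝ≥0∞}

theorem deltaVec_apply (i j : ℕ) : deltaVec q i j = if j = i then 1 else 0 := by
  have hind := Measure.ae_count_iff.1 (indicatorConstLp_coeFn (p := q)
    (hs := measurableSet_singleton i) (c := (1 : ℝ)) (hμs := by simp)) j
  simp [deltaVec, hind, Set.indicator_apply]

noncomputable def deltaCombo (q : ℝ≥0∞) (F : Finset ℕ) (c : ℕ → ℝ≥0) : ℓ^q :=
  ∑ i ∈ F, (c i : ℝ) • deltaVec q i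

theorem deltaCombo_apply (F : Finset ℕ) (c : ℕ → ℝ≥0) (j : ℕ) :
    deltaCombo q F c j = if j ∈ F then (c j : ℝ) else 0 := by
  have hsum := Measure.ae_count_iff.1
    (Lp.coeFn_fun_finsetSum F fun i => (c i : ℝ) • deltaVec q i) j
  have hsmul (i : ℕ) := Measure.ae_count_iff.1 (Lp.coeFn_smul (c i : ℝ) (deltaVec q i)) j
  simp only [Pi.smul_apply, smul_eq_mul] at hsmul
  rw [deltaCombo, hsum]
  simp [hsmul, deltaVec_apply]

theorem deltaCombo_nonneg (F : Finset ℕ) (c : ℕ → ℝ≥0) : 0 ≤ deltaCombo q F c :=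
  (Lp.coeFn_nonneg _).1 <| Measure.ae_count_iff.2 fun j => by
    rw [Pi.zero_apply, deltaCombo_apply]; split_ifs <;> simp

theorem deltaCombo_mono {S T : Finset ℕ} (hST : S ⊆ T) (c : ℕ → ℝ≥0) :
    deltaCombo q S c ≤ deltaCombo q T c :=
  (Lp.coeFn_le _ _).1 <| Measure.ae_count_iff.2 fun j => by
    rw [deltaCombo_apply, deltaCombo_apply]
    split_ifs with hS hT hT
    · exact le_rfl
    · exact absurd (hST hS) hT
    · exact (c j).coe_nonneg
    · exact le_rfl

theorem deltaCombo_inf_eq_zero {S T : Finset ℕ} (hST : Disjoint S T) (c : ℕ → ℝ≥0) :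
    deltaCombo q S c ⊓ deltaCombo q T c = 0 := by
  refine Lp.ext ?_
  filter_upwards [Lp.coeFn_inf (deltaCombo q S c) (deltaCombo q T c),
    Lp.coeFn_zero ℝ q Measure.count] with j hinf hzero
  rw [hinf, hzero, Pi.inf_apply, deltaCombo_apply, deltaCombo_apply]
  split_ifs with hS hT
  · exact absurd hT (disjoint_left.1 hST hS)
  all_goals simp

theorem norm_deltaCombo_rpow [Fact (1 ≤ q)] (hq : q ≠ ⊤) (F : Finset ℕ) (c : ℕ → ℝ≥0) :
    ‖deltaCombo q F c‖ ^ q.toReal = ∑ i ∈ F, (c i : ℝ) ^ q.toReal := by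
  have hq0 : q ≠ 0 := (zero_lt_one.trans_le (Fact.out : 1 ≤ q)).ne'
  have hpos : 0 < q.toReal := ENNReal.toReal_pos hq0 hq
  rw [Lp.norm_rpow_toReal_eq_lintegral hq0 hq, lintegral_count,
    tsum_eq_sum (s := F) fun j hj => by simp [deltaCombo_apply, hj, hpos],
    ENNReal.toReal_sum fun i _ => by simp [deltaCombo_apply, hpos.le]]
  refine sum_congr rfl fun i hi => ?_
  simp [deltaCombo_apply, hi, ← ENNReal.toReal_rpow]

theorem mem_span_range_deltaVec_iff {x : ℓ^q} :
    x ∈ Submodule.span ℝ≥0 (Set.range (deltaVec q)) ↔ ∃ F c, x = deltaCombo q F c := by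
  constructor
  · rw [Finsupp.mem_span_range_iff_exists_finsupp]
    rintro ⟨c, rfl⟩
    exact ⟨c.support, c, by simp [Finsupp.sum, deltaCombo, NNReal.smul_def]⟩
  · rintro ⟨F, c, rfl⟩
    refine Submodule.sum_mem _ fun i _ => ?_
    rw [← NNReal.smul_def]
    exact Submodule.smul_mem _ _ (Submodule.subset_span ⟨i, rfl⟩)

theorem abs_mem_closure_span_range_deltaVec [Fact (1 ≤ q)] (hq : q ≠ ⊤) (f : ℓ^q) :
    |f| ∈ closure (Submodule.span ℝ≥0 (Set.range (deltaVec q)) : Set (ℓ^q)) := by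
  set K := Submodule.span ℝ≥0 (Set.range (deltaVec q))
  rw [← K.topologicalClosure_coe]
  refine Lp.induction hq (fun f => |f| ∈ K.topologicalClosure) ?_ ?_ ?_ f
  · intro e s hs hμs
    refine K.le_topologicalClosure (mem_span_range_deltaVec_iff.2
      ⟨(Measure.count_apply_lt_top.1 hμs).toFinset, fun _ => ‖e‖₊, Lp.ext ?_⟩)
    refine Measure.ae_count_iff.2 fun j => ?_
    rw [Measure.ae_count_iff.1 (Lp.coeFn_abs _) j, Lp.simpleFunc.coe_indicatorConst,
      deltaCombo_apply]
    by_cases hj : j ∈ s <;> simp [Measure.ae_count_iff.1 indicatorConstLp_coeFn j, hj]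
  · intro f g hf hg hdisj hf' hg'
    suffices habs : |hf.toLp f + hg.toLp g| = |hf.toLp f| + |hg.toLp g| by
      rw [habs]; exact add_mem hf' hg'
    refine Lp.ext (Measure.ae_count_iff.2 fun j => ?_)
    simp only [Measure.ae_count_iff.1 (Lp.coeFn_abs _) j, Pi.add_apply,
      Measure.ae_count_iff.1 (Lp.coeFn_add _ _) j, Measure.ae_count_iff.1 hf.coeFn_toLp j,
      Measure.ae_count_iff.1 hg.coeFn_toLp j]
    by_cases hfj : f j = 0
    · simp [hfj]
    · simp [Function.notMem_support.1 (Set.disjoint_left.1 hdisj hfj)]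
  · exact K.isClosed_topologicalClosure.preimage (continuous_id.sup continuous_neg)

variable [Fact (1 ≤ q)] {Ω : Type*} [MeasurableSpace Ω] {μ : Measure Ω}

theorem norm_sup'_apply_deltaCombo_singleton_le (hq : q ≠ ⊤) (R : ℓ^q →L[ℝ] Lp ℝ q μ)
    {ε₂ : ℝ} (h2 : ∀ i, ‖R (deltaVec q i)‖ ≤ ε₂) {F : Finset ℕ} (hF : F.Nonempty)
    (c : ℕ → ℝ≥0) :
    ‖F.sup' hF (fun i => R (deltaCombo q {i} c))‖ ≤ ε₂ * ‖deltaCombo q F c‖ := by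
  have hq0 : q ≠ 0 := (zero_lt_one.trans_le (Fact.out : 1 ≤ q)).ne'
  have hr : 0 < q.toReal := ENNReal.toReal_pos hq0 hq
  have hε₂ : 0 ≤ ε₂ := (norm_nonneg _).trans (h2 0)
  have hsingle (i : ℕ) : ‖R (deltaCombo q {i} c)‖ ≤ ε₂ * c i := by
    rw [deltaCombo, sum_singleton, map_smul, norm_smul, Real.norm_of_nonneg (c i).coe_nonneg,
      mul_comm]
    exact mul_le_mul_of_nonneg_right (h2 i) (c i).coe_nonneg
  refine (Real.rpow_le_rpow_iff (norm_nonneg _) (by positivity) hr).1 ?_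
  calc ‖F.sup' hF (fun i => R (deltaCombo q {i} c))‖ ^ q.toReal
      ≤ ∑ i ∈ F, ‖R (deltaCombo q {i} c)‖ ^ q.toReal := Lp.norm_finset_sup'_rpow_le hq0 hq hF _
    _ ≤ ∑ i ∈ F, ε₂ ^ q.toReal * (c i : ℝ) ^ q.toReal := by
        gcongr with i
        rw [← Real.mul_rpow hε₂ (c i).coe_nonneg]
        exact Real.rpow_le_rpow (norm_nonneg _) (hsingle i) hr.le
    _ = (ε₂ * ‖deltaCombo q F c‖) ^ q.toReal := by
        rw [← mul_sum, ← norm_deltaCombo_rpow hq, Real.mul_rpow hε₂ (norm_nonneg _)]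

theorem norm_apply_deltaCombo_le (hq : q ≠ ⊤) (R : ℓ^q →L[ℝ] Lp ℝ q μ) {ε₁ ε₂ : ℝ}
    (hpos : ∀ x, 0 ≤ x → 0 ≤ R x)
    (h1 : ∀ x y : ℓ^q, 0 ≤ x → 0 ≤ y → ‖x‖ ≤ 1 → ‖y‖ ≤ 1 → x ⊓ y = 0 → ‖R x ⊓ R y‖ ≤ ε₁)
    (h2 : ∀ i, ‖R (deltaVec q i)‖ ≤ ε₂) {F : Finset ℕ} (hF : F.Nonempty) (c : ℕ → ℝ≥0)
    (hx : ‖deltaCombo q F c‖ ≤ 1) : ‖R (deltaCombo q F c)‖ ≤ ε₂ + 4 * ε₁ := by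
  have hsum (S : Finset ℕ) : ∑ i ∈ S, R (deltaCombo q {i} c) = R (deltaCombo q S c) := by
    simp only [deltaCombo, sum_singleton, map_sum]
  have hnorm {S : Finset ℕ} (hS : S ⊆ F) : ‖deltaCombo q S c‖ ≤ 1 :=
    (norm_le_norm_of_nonneg_of_le' (deltaCombo_nonneg S c) (deltaCombo_mono hS c)).trans hx
  have hsplit : ∀ S ∈ F.powerset,
      ‖R (deltaCombo q S c) ⊓ R (deltaCombo q (F \ S) c)‖ ≤ ε₁ := fun S hS =>
    h1 _ _ (deltaCombo_nonneg S c) (deltaCombo_nonneg _ c) (hnorm (mem_powerset.1 hS))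
      (hnorm sdiff_subset) (deltaCombo_inf_eq_zero disjoint_sdiff c)
  have horder := Lp.sum_le_sup'_add_sum_powerset_inf hF
    (fun i _ => hpos _ (deltaCombo_nonneg {i} c))
  simp only [hsum] at horder
  set G := F.sup' hF fun i => R (deltaCombo q {i} c)
  set H := ∑ S ∈ F.powerset, R (deltaCombo q S c) ⊓ R (deltaCombo q (F \ S) c)
  have hG : ‖G‖ ≤ ε₂ := (norm_sup'_apply_deltaCombo_singleton_le hq R h2 hF c).trans
    (mul_le_of_le_one_right ((norm_nonneg _).trans (h2 0)) hx)
  have hH : ‖H‖ ≤ 2 ^ #F * ε₁ := by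
    simpa [card_powerset] using norm_sum_le_of_le _ hsplit
  calc ‖R (deltaCombo q F c)‖ ≤ ‖G + (4 / 2 ^ #F : ℝ) • H‖ :=
        norm_le_norm_of_nonneg_of_le' (hpos _ (deltaCombo_nonneg F c)) horder
    _ ≤ ‖G‖ + ‖(4 / 2 ^ #F : ℝ) • H‖ := norm_add_le _ _
    _ = ‖G‖ + 4 / 2 ^ #F * ‖H‖ := by rw [norm_smul, Real.norm_of_nonneg (by positivity)]
    _ ≤ ε₂ + 4 / 2 ^ #F * (2 ^ #F * ε₁) := by gcongr
    _ = ε₂ + 4 * ε₁ := by field_simp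

end SequenceSpace

/-- If `R : ℓ_q → L_q(μ)` is positive, `‖Rx ⊓ Ry‖ ≤ ε₁` for disjoint positive
`x, y` in the unit ball, and `‖R δ_i‖ ≤ ε₂` for all `i`, then `‖R‖ ≤ 2^8 ε₁ + ε₂`. -/
theorem stmt11 {Ω : Type*} [MeasurableSpace Ω] (μ : Measure Ω)
    (q : ℝ≥0∞) [Fact (1 ≤ q)] (hq : q ≠ ⊤)
    (ε₁ ε₂ : ℝ)
    (R : Lp ℝ q (Measure.count : Measure ℕ) →L[ℝ] Lp ℝ q μ)
    (hpos : ∀ x : Lp ℝ q (Measure.count : Measure ℕ), 0 ≤ x → 0 ≤ R x)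
    (h1 : ∀ x y : Lp ℝ q (Measure.count : Measure ℕ),
      0 ≤ x → 0 ≤ y → ‖x‖ ≤ 1 → ‖y‖ ≤ 1 → x ⊓ y = 0 → ‖R x ⊓ R y‖ ≤ ε₁)
    (h2 : ∀ i : ℕ, ‖R (deltaVec q i)‖ ≤ ε₂) :
    ‖R‖ ≤ 2 ^ 8 * ε₁ + ε₂ := by
  have hε₁ : 0 ≤ ε₁ := by simpa using h1 0 0 le_rfl le_rfl (by simp) (by simp) (by simp)
  have hε₂ : 0 ≤ ε₂ := (norm_nonneg _).trans (h2 0)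
  have hcone : ∀ x ∈ Submodule.span ℝ≥0 (Set.range (deltaVec q)), ‖x‖ = 1 →
      ‖R x‖ ≤ ε₂ + 4 * ε₁ := by
    intro x hx hx1
    obtain ⟨F, c, rfl⟩ := mem_span_range_deltaVec_iff.1 hx
    have hF : F.Nonempty := nonempty_iff_ne_empty.2 (by rintro rfl; simp [deltaCombo] at hx1)
    exact norm_apply_deltaCombo_le hq R hpos h1 h2 hF c hx1.le
  refine R.opNorm_le_bound (by positivity) fun f => ?_
  calc ‖R f‖ ≤ ‖R |f|‖ := norm_le_norm_of_abs_le_abs <| by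
        rw [abs_of_nonneg (hpos _ (abs_nonneg f))]; exact abs_map_le_map_abs hpos f
    _ ≤ (ε₂ + 4 * ε₁) * ‖|f|‖ :=
        R.norm_apply_le_mul_norm_of_mem_closure hcone (abs_mem_closure_span_range_deltaVec hq f)
    _ ≤ (2 ^ 8 * ε₁ + ε₂) * ‖f‖ := by
        rw [norm_abs_eq_norm]
        exact mul_le_mul_of_nonneg_right (by linarith) (norm_nonneg f)
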